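/- Let π_n, π ∈ Π. If π_n → π in the J1 topology, then the closed graphs π_n converge to the closed graph π in the local Hausdorff topology on Cl(S), where S := ℝ̄ × ℝ. Similarly, if π_n → π in the M1 topology, then the filled graphs π̄_n converge to π̄ in the local Hausdorff topology on Cl(S). -/

import Mathlib

noncomputable section

open Set Filter Topology MeasureTheory

namespace PathsPaper

/-- `tanh` extended to `EReal`, with `tanh (±∞) := ±1`. -/
def etanh (x : EReal) : ℝ :=
  if x = ⊤ then 1 else if x = ⊥ then -1 else Real.tanh x.toReal

/-- The squeezed space `ℝ²_c = (ℝ̄ × ℝ) ∪ {(∗,−∞), (∗,+∞)}`; here `Sum.inr false`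
represents `(∗,−∞)` and `Sum.inr true` represents `(∗,+∞)`. -/
abbrev Rsq := (EReal × ℝ) ⊕ Bool

/-- The embedding `Θ` of the squeezed space into `ℝ²`. -/
def theta : Rsq → ℝ × ℝ
  | Sum.inl p => (etanh p.1 / (1 + |p.2|), Real.tanh p.2)
  | Sum.inr b => (0, if b then 1 else -1)

/-- The metric `d_sqz` on the squeezed space (Euclidean distance of the `Θ`-images). -/
def dSqz (z z' : Rsq) : ℝ :=
  Real.sqrt (((theta z).1 - (theta z').1) ^ 2 + ((theta z).2 - (theta z').2) ^ 2)

/-- A path: a closed time domain `I ⊆ ℝ` together with a left value function `l = π(·−)`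
and a right value function `r = π(·+)` with values in `ℝ̄ = EReal`, such that `r` is
right-continuous along `I`, `l` is left-continuous along `I`, `l t = lim_{s↑t, s∈I} r s`
whenever `t` is a left accumulation point of `I`, and `r t = lim_{s↓t, s∈I} l s` whenever
`t` is a right accumulation point of `I`.  (The values outside `I` are normalised to `0`
so that a path is determined by its values on `I`.) -/
structure PathSp where
  I : Set ℝ
  closed_I : IsClosed I
  l : ℝ → EReal
  r : ℝ → EReal
  l_default : ∀ t, t ∉ I → l t = 0
  r_default : ∀ t, t ∉ I → r t = 0
  right_cont : ∀ t ∈ I, Tendsto r (𝓝[I ∩ Ioi t] t) (𝓝 (r t))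
  left_cont : ∀ t ∈ I, Tendsto l (𝓝[I ∩ Iio t] t) (𝓝 (l t))
  left_lim : ∀ t ∈ I, Tendsto r (𝓝[I ∩ Iio t] t) (𝓝 (l t))
  right_lim : ∀ t ∈ I, Tendsto l (𝓝[I ∩ Ioi t] t) (𝓝 (r t))

/-- The closed graph of a path, a subset of `S = ℝ̄ × ℝ`. -/
def graph (π : PathSp) : Set (EReal × ℝ) :=
  {p | p.2 ∈ π.I ∧ (p.1 = π.l p.2 ∨ p.1 = π.r p.2)}

/-- The filled graph of a path. -/
def fgraph (π : PathSp) : Set (EReal × ℝ) :=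
  {p | p.2 ∈ π.I ∧ p.1 ∈ uIcc (π.l p.2) (π.r p.2)}

/-- The strict total order `≺` on the (filled) graph of `π`: `(x,s) ≺ (y,t)` iff `s < t`,
or `s = t` and `x ≠ y` and `x` lies between `π(t−)` and `y`. -/
def gLt (π : PathSp) (p q : EReal × ℝ) : Prop :=
  p.2 < q.2 ∨ (p.2 = q.2 ∧ p.1 ≠ q.1 ∧ p.1 ∈ uIcc (π.l q.2) q.1)

/-- The total order `⪯` on the (filled) graph of `π`. -/
def gLe (π : PathSp) (p q : EReal × ℝ) : Prop := p = q ∨ gLt π p q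

/-- `π∗` (resp. `π̄∗`): a graph together with the two points at infinity of the squeezed
space. -/
def starSet (G : Set (EReal × ℝ)) : Set Rsq :=
  (Sum.inl '' G) ∪ {Sum.inr false, Sum.inr true}

/-- The order `≺` extended to the squeezed space, `(∗,−∞)` minimal, `(∗,+∞)` maximal. -/
def sLt (π : PathSp) : Rsq → Rsq → Prop
  | Sum.inl p, Sum.inl q => gLt π p q
  | Sum.inl _, Sum.inr b => b = true
  | Sum.inr b, Sum.inl _ => b = false
  | Sum.inr b, Sum.inr b' => b = false ∧ b' = true

/-- `C` is a correspondence between `A` and `B`. -/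
def IsCorr (A B : Set Rsq) (C : Set (Rsq × Rsq)) : Prop :=
  C ⊆ A ×ˢ B ∧ (∀ a ∈ A, ∃ b ∈ B, (a, b) ∈ C) ∧ (∀ b ∈ B, ∃ a ∈ A, (a, b) ∈ C)

/-- A correspondence is monotone if it contains no pair of order-violating elements. -/
def IsMono (π₁ π₂ : PathSp) (C : Set (Rsq × Rsq)) : Prop :=
  ¬ ∃ z ∈ C, ∃ z' ∈ C, sLt π₁ z.1 z'.1 ∧ sLt π₂ z'.2 z.2

def corrSup (C : Set (Rsq × Rsq)) : ℝ := sSup ((fun z : Rsq × Rsq => dSqz z.1 z.2) '' C)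

/-- The Skorohod J1 metric on the path space. -/
def dJ1 (π₁ π₂ : PathSp) : ℝ :=
  sInf {h | ∃ C, IsCorr (starSet (graph π₁)) (starSet (graph π₂)) C ∧ IsMono π₁ π₂ C ∧
    h = corrSup C}

/-- The Skorohod M1 metric on the path space. -/
def dM1 (π₁ π₂ : PathSp) : ℝ :=
  sInf {h | ∃ C, IsCorr (starSet (fgraph π₁)) (starSet (fgraph π₂)) C ∧ IsMono π₁ π₂ C ∧
    h = corrSup C}

/-- The topology generated by the open balls of a distance function (for a metric, this
is the metric topology). -/
def ballTop {X : Type*} (d : X → X → ℝ) : TopologicalSpace X :=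
  TopologicalSpace.generateFrom {U | ∃ x ε, 0 < ε ∧ U = {y | d x y < ε}}

/-- The J1 topology on the path space. -/
def J1Top : TopologicalSpace PathSp := ballTop dJ1

/-- The M1 topology on the path space. -/
def M1Top : TopologicalSpace PathSp := ballTop dM1

/-- Convergence of a sequence of paths in the J1 topology. -/
def J1Conv (πn : ℕ → PathSp) (π : PathSp) : Prop :=
  Tendsto (fun n => dJ1 (πn n) π) atTop (𝓝 0)

/-- Convergence of a sequence of paths in the M1 topology. -/
def M1Conv (πn : ℕ → PathSp) (π : PathSp) : Prop :=
  Tendsto (fun n => dM1 (πn n) π) atTop (𝓝 0)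

/-- The Hausdorff distance between two sets associated with a distance function `d`. -/
def hausDist {X : Type*} (d : X → X → ℝ) (A B : Set X) : ℝ :=
  max (sSup ((fun a => sInf ((fun b => d a b) '' B)) '' A))
      (sSup ((fun b => sInf ((fun a => d a b) '' A)) '' B))

/-- `K_+(X)`: the nonempty compact subsets of a topological space. -/
def KP {X : Type*} (τ : TopologicalSpace X) : Type _ :=
  {A : Set X // @IsCompact X τ A ∧ A.Nonempty}

/-- The Hausdorff topology on `K_+(X)`, from a metric `d` generating `τ`. -/
def KPtop {X : Type*} (τ : TopologicalSpace X) (d : X → X → ℝ) : TopologicalSpace (KP τ) :=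
  ballTop (fun A B => hausDist d A.1 B.1)

/-- Tightness of the laws of a family of random variables `A γ` with values in a space `K`
equipped with a topology `τK`: for every `ε > 0` there is a compact `C ⊆ K` whose
complement has probability at most `ε` for every `γ`. -/
def Tight {Γ : Type*} {K : Type*} (τK : TopologicalSpace K)
    {Ω : Γ → Type*} [∀ γ, MeasurableSpace (Ω γ)]
    (P : ∀ γ, Measure (Ω γ)) (A : ∀ γ, Ω γ → K) : Prop :=
  ∀ ε : ℝ, 0 < ε → ∃ C : Set K, @IsCompact K τK C ∧
    ∀ γ, P γ {ω | A γ ω ∉ C} ≤ ENNReal.ofReal ε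

/-- `Δ²_{T,δ}(π)`. -/
def Delta2 (π : PathSp) (T δ : ℝ) : Set (EReal × EReal) :=
  {p | ∃ s t : ℝ, -T ≤ s ∧ s ≤ t ∧ t ≤ T ∧ t - s ≤ δ ∧
    (p.1, s) ∈ graph π ∧ (p.2, t) ∈ graph π ∧ gLe π (p.1, s) (p.2, t)}

/-- `Δ³_{T,δ}(π)`. -/
def Delta3 (π : PathSp) (T δ : ℝ) : Set (EReal × EReal × EReal) :=
  {p | ∃ s t u : ℝ, -T ≤ s ∧ s ≤ t ∧ t ≤ u ∧ u ≤ T ∧ u - s ≤ δ ∧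
    (p.1, s) ∈ graph π ∧ (p.2.1, t) ∈ graph π ∧ (p.2.2, u) ∈ graph π ∧
    gLe π (p.1, s) (p.2.1, t) ∧ gLe π (p.2.1, t) (p.2.2, u)}

/-- `S⁺_{T,δ,ε,r}`. -/
def Splus (T δ ε r : ℝ) : Set PathSp :=
  {π | ∃ x y : EReal, (x, y) ∈ Delta2 π T δ ∧ x ≤ (r : EReal) ∧ ((r + ε : ℝ) : EReal) ≤ y}

/-- `S⁻_{T,δ,ε,r}`. -/
def Sminus (T δ ε r : ℝ) : Set PathSp :=
  {π | ∃ x y : EReal, (x, y) ∈ Delta2 π T δ ∧ y ≤ (r : EReal) ∧ ((r + ε : ℝ) : EReal) ≤ x}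

/-- `S²_{T,δ,ε,r}`. -/
def S2 (T δ ε r : ℝ) : Set PathSp := Splus T δ ε r ∪ Sminus T δ ε r

/-- `S^{+−}_{T,δ,ε,r}`. -/
def Spm (T δ ε r : ℝ) : Set PathSp :=
  {π | ∃ x y z : EReal, (x, y, z) ∈ Delta3 π T δ ∧
    x ≤ (r : EReal) ∧ z ≤ (r : EReal) ∧ ((r + ε : ℝ) : EReal) ≤ y}

/-- `S^{−+}_{T,δ,ε,r}`. -/
def Smp (T δ ε r : ℝ) : Set PathSp :=
  {π | ∃ x y z : EReal, (x, y, z) ∈ Delta3 π T δ ∧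
    y ≤ (r : EReal) ∧ ((r + ε : ℝ) : EReal) ≤ x ∧ ((r + ε : ℝ) : EReal) ≤ z}

/-- `S^{++}_{T,δ,ε,r}`. -/
def Spp (T δ ε r : ℝ) : Set PathSp :=
  {π | ∃ x y z : EReal, (x, y, z) ∈ Delta3 π T δ ∧
    x ≤ (r : EReal) ∧ ((r + ε : ℝ) : EReal) ≤ y ∧ y ≤ ((r + 2 * ε : ℝ) : EReal) ∧
    ((r + 3 * ε : ℝ) : EReal) ≤ z}

/-- `S^{−−}_{T,δ,ε,r}`. -/
def Smm (T δ ε r : ℝ) : Set PathSp :=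
  {π | ∃ x y z : EReal, (x, y, z) ∈ Delta3 π T δ ∧
    z ≤ (r : EReal) ∧ ((r + ε : ℝ) : EReal) ≤ y ∧ y ≤ ((r + 2 * ε : ℝ) : EReal) ∧
    ((r + 3 * ε : ℝ) : EReal) ≤ x}

/-- `S^J_{T,δ,ε,r}`. -/
def SJ (T δ ε r : ℝ) : Set PathSp := Spp T δ ε r ∪ Smm T δ ε r

/-- `S^M_{T,δ,ε,r}`. -/
def SM (T δ ε r : ℝ) : Set PathSp := Spm T δ ε r ∪ Smp T δ ε r

/-- `Δ²_{T,δ}(π₁,π₂)` for a pair of paths. -/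
def Delta2Pair (π₁ π₂ : PathSp) (T δ : ℝ) : Set (EReal × EReal × EReal × EReal) :=
  {q | ∃ s₁ t₁ s₂ t₂ : ℝ,
    -T ≤ s₁ ∧ s₁ ≤ t₁ ∧ t₁ ≤ T ∧ -T ≤ s₂ ∧ s₂ ≤ t₂ ∧ t₂ ≤ T ∧
    (q.1, s₁) ∈ graph π₁ ∧ (q.2.1, t₁) ∈ graph π₁ ∧ gLe π₁ (q.1, s₁) (q.2.1, t₁) ∧
    (q.2.2.1, s₂) ∈ graph π₂ ∧ (q.2.2.2, t₂) ∈ graph π₂ ∧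
    gLe π₂ (q.2.2.1, s₂) (q.2.2.2, t₂) ∧
    max t₁ t₂ - min s₁ s₂ ≤ δ}

/-- `C^M_{T,δ,ε,r}`. -/
def CM (T δ ε r : ℝ) : Set (PathSp × PathSp) :=
  {pp | ∃ x₁ y₁ x₂ y₂ : EReal, (x₁, y₁, x₂, y₂) ∈ Delta2Pair pp.1 pp.2 T δ ∧
    x₁ ≤ (r : EReal) ∧ y₂ ≤ (r : EReal) ∧
    ((r + ε : ℝ) : EReal) ≤ y₁ ∧ ((r + ε : ℝ) : EReal) ≤ x₂}

/-- `φ(x) = x/√(1+x²)` extended to `ℝ̄`. -/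
def phiR (x : EReal) : ℝ :=
  if x = ⊤ then 1 else if x = ⊥ then -1 else x.toReal / Real.sqrt (1 + x.toReal ^ 2)

/-- The metric `d_ℝ̄` on `ℝ̄`. -/
def dR (x y : EReal) : ℝ := |phiR x - phiR y|

/-- The modulus of continuity `m_{T,δ}(π)`. -/
def modC (π : PathSp) (T δ : ℝ) : ℝ :=
  sSup {h | ∃ x y : EReal, (x, y) ∈ Delta2 π T δ ∧ h = dR x y}

/-- The modulus `m^J_{T,δ}(π)`. -/
def modJ (π : PathSp) (T δ : ℝ) : ℝ :=
  sSup {h | ∃ x y z : EReal, (x, y, z) ∈ Delta3 π T δ ∧ h = min (dR y x) (dR y z)}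

/-- The modulus `m^M_{T,δ}(π)`. -/
def modM (π : PathSp) (T δ : ℝ) : ℝ :=
  sSup {h | ∃ x y z : EReal, (x, y, z) ∈ Delta3 π T δ ∧
    h = sInf ((fun w => dR y w) '' uIcc x z)}

/-- `T²_{T,δ,η}`. -/
def T2set (T δ η : ℝ) : Set PathSp :=
  {π | ∃ x y : EReal, (x, y) ∈ Delta2 π T δ ∧ dR x y > η}

/-- `T⁺_{T,δ,η}`. -/
def Tplus (T δ η : ℝ) : Set PathSp :=
  {π | ∃ x y : EReal, (x, y) ∈ Delta2 π T δ ∧ x < y ∧ dR x y > η}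

/-- `T⁻_{T,δ,η}`. -/
def Tminus (T δ η : ℝ) : Set PathSp :=
  {π | ∃ x y : EReal, (x, y) ∈ Delta2 π T δ ∧ y < x ∧ dR x y > η}

/-- `T^{++}_{T,δ,η}`. -/
def Tpp (T δ η : ℝ) : Set PathSp :=
  {π | ∃ x y z : EReal, (x, y, z) ∈ Delta3 π T δ ∧ x < y ∧ y < z ∧
    dR x y > η ∧ dR y z > η}

/-- `T^{+−}_{T,δ,η}`. -/
def Tpm (T δ η : ℝ) : Set PathSp :=
  {π | ∃ x y z : EReal, (x, y, z) ∈ Delta3 π T δ ∧ x < y ∧ z < y ∧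
    dR x y > η ∧ dR y z > η}

/-- `T^{−+}_{T,δ,η}`. -/
def Tmp (T δ η : ℝ) : Set PathSp :=
  {π | ∃ x y z : EReal, (x, y, z) ∈ Delta3 π T δ ∧ y < x ∧ y < z ∧
    dR x y > η ∧ dR y z > η}

/-- `T^{−−}_{T,δ,η}`. -/
def Tmm (T δ η : ℝ) : Set PathSp :=
  {π | ∃ x y z : EReal, (x, y, z) ∈ Delta3 π T δ ∧ y < x ∧ z < y ∧
    dR x y > η ∧ dR y z > η}

/-- `T^J_{T,δ,η}`. -/
def TJ (T δ η : ℝ) : Set PathSp := Tpp T δ η ∪ Tmm T δ η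

/-- `T^M_{T,δ,η}`. -/
def TM (T δ η : ℝ) : Set PathSp := Tpm T δ η ∪ Tmp T δ η

/-- A continuous path. -/
def IsContP (π : PathSp) : Prop := ∀ t ∈ π.I, π.l t = π.r t

/-- The space `Π_c` of continuous paths. -/
def PathC : Type := {π : PathSp // IsContP π}

/-- The (J1 = M1) metric on `Π_c`. -/
def dC (π₁ π₂ : PathC) : ℝ := dJ1 π₁.1 π₂.1

/-- The topology on `Π_c`. -/
def CTop : TopologicalSpace PathC := ballTop dC

/-- A connected path: the domain is an interval. -/
def IsConn (π : PathSp) : Prop := π.I.OrdConnected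

/-- A bi-infinite path: the domain is all of `ℝ`. -/
def IsBiInf (π : PathSp) : Prop := π.I = univ

/-- `π'` extends `π`. -/
def ExtendsP (π' π : PathSp) : Prop := fgraph π ⊆ fgraph π'

/-- The relation `π₁ ◁ π₂`. -/
def OrdBelow (π₁ π₂ : PathSp) : Prop :=
  ∃ π₁' π₂' : PathSp, IsBiInf π₁' ∧ IsBiInf π₂' ∧ ExtendsP π₁' π₁ ∧ ExtendsP π₂' π₂ ∧
    ∀ t : ℝ, π₁'.l t ≤ π₂'.l t ∧ π₁'.r t ≤ π₂'.r t

/-- A noncrossing set of paths. -/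
def Noncrossing (A : Set PathSp) : Prop :=
  ∀ π₁ ∈ A, ∀ π₂ ∈ A, OrdBelow π₁ π₂ ∨ OrdBelow π₂ π₁

/-- `π₁` crosses `π₂`. -/
def Crosses (π₁ π₂ : PathSp) : Prop := ¬ OrdBelow π₁ π₂ ∧ ¬ OrdBelow π₂ π₁

/-- `π₁` collides with `π₂` at time `t`: at time `t` the two paths jump over some
interval in opposite directions. -/
def CollidesAt (π₁ π₂ : PathSp) (t : ℝ) : Prop :=
  t ∈ π₁.I ∧ t ∈ π₂.I ∧
  ((π₁.r t < π₁.l t ∧ π₁.r t < π₂.r t ∧ π₂.l t < π₁.l t ∧ π₂.l t < π₂.r t) ∨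
   (π₁.l t < π₁.r t ∧ π₁.l t < π₂.l t ∧ π₂.r t < π₁.r t ∧ π₂.r t < π₂.l t))

/-- `∂I`: the finite boundary points of the domain of `π`. -/
def bdryI (π : PathSp) : Set ℝ := π.I \ interior π.I

/-- `t` is the (finite) minimum of `I`. -/
def IsMinOf (I : Set ℝ) (t : ℝ) : Prop := t ∈ I ∧ ∀ s ∈ I, t ≤ s

/-- `t` is the (finite) maximum of `I`. -/
def IsMaxOf (I : Set ℝ) (t : ℝ) : Prop := t ∈ I ∧ ∀ s ∈ I, s ≤ t

/-- `∂⁻I`, the set of finite lower boundary points. -/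
def bdryMinus (I : Set ℝ) : Set ℝ := {t | IsMinOf I t}

/-- `∂⁺I`, the set of finite upper boundary points. -/
def bdryPlus (I : Set ℝ) : Set ℝ := {t | IsMaxOf I t}

/-- Evaluation of a path at a point `t±` of the split real line; `(t, false)` stands
for `t−` and `(t, true)` for `t+`. -/
def pev (π : PathSp) (tb : ℝ × Bool) : EReal := if tb.2 then π.r tb.1 else π.l tb.1

/-- `I^𝔰_π`: points `t±` with `t ∈ I_π`, excluding `s−` and `u+` where `s, u` are the
initial and final times. -/
def Isplit (π : PathSp) : Set (ℝ × Bool) :=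
  {tb | tb.1 ∈ π.I ∧ ¬ (tb.2 = false ∧ IsMinOf π.I tb.1) ∧ ¬ (tb.2 = true ∧ IsMaxOf π.I tb.1)}

/-- `I^l_π`. -/
def Il (π : PathSp) : Set (ℝ × Bool) :=
  Isplit π ∪ {tb | tb.2 = false ∧ IsMinOf π.I tb.1 ∧ π.r tb.1 < π.l tb.1}
    ∪ {tb | tb.2 = true ∧ IsMaxOf π.I tb.1 ∧ π.l tb.1 < π.r tb.1}

/-- `I^r_π`. -/
def Ir (π : PathSp) : Set (ℝ × Bool) :=
  Isplit π ∪ {tb | tb.2 = false ∧ IsMinOf π.I tb.1 ∧ π.l tb.1 < π.r tb.1}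
    ∪ {tb | tb.2 = true ∧ IsMaxOf π.I tb.1 ∧ π.r tb.1 < π.l tb.1}

/-- `L(π)`. -/
def Lset (π : PathSp) : Set (EReal × ℝ × Bool) := {p | p.2 ∈ Il π ∧ p.1 < pev π p.2}

/-- `R(π)`. -/
def Rset (π : PathSp) : Set (EReal × ℝ × Bool) := {p | p.2 ∈ Ir π ∧ pev π p.2 < p.1}

/-- `L°(π)`. -/
def Lo (π : PathSp) : Set (EReal × ℝ) :=
  {p | p.2 ∈ interior π.I ∧ p.1 < min (π.l p.2) (π.r p.2)}

/-- `L̄(π)`. -/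
def Lbar (π : PathSp) : Set (EReal × ℝ) :=
  {p | p.2 ∈ π.I ∧ p.1 ≤ max (π.l p.2) (π.r p.2)}

/-- `L^c(π) = S ∖ L°(π)`. -/
def Lc (π : PathSp) : Set (EReal × ℝ) := (Lo π)ᶜ

/-- `R°(π)`. -/
def Ro (π : PathSp) : Set (EReal × ℝ) :=
  {p | p.2 ∈ interior π.I ∧ max (π.l p.2) (π.r p.2) < p.1}

/-- `R̄(π)`. -/
def Rbar (π : PathSp) : Set (EReal × ℝ) :=
  {p | p.2 ∈ π.I ∧ min (π.l p.2) (π.r p.2) ≤ p.1}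

/-- `π^⟨2⟩`: the ordered pairs of points of the closed graph. -/
def gr2 (π : PathSp) : Set ((EReal × ℝ) × (EReal × ℝ)) :=
  {q | q.1 ∈ graph π ∧ q.2 ∈ graph π ∧ gLe π q.1 q.2}

/-- `π̄^⟨2⟩`: the ordered pairs of points of the filled graph. -/
def fgr2 (π : PathSp) : Set ((EReal × ℝ) × (EReal × ℝ)) :=
  {q | q.1 ∈ fgraph π ∧ q.2 ∈ fgraph π ∧ gLe π q.1 q.2}

/-- Convergence `A_n → B` of closed subsets of `Y` in the local Hausdorff topology,
expressed through its standard sequential characterisation (Lemma 2.2 of the paper,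
which also shows this is independent of the choice of metric): every point of `B` is a
limit of points of `A_{n,∞} = A_n ∪ {∞}` in the one-point compactification, and every
cluster point in `Y` of such a sequence lies in `B`. -/
def LHConv {Y : Type*} [TopologicalSpace Y] (A : ℕ → Set Y) (B : Set Y) : Prop :=
  (∀ x ∈ B, ∃ u : ℕ → OnePoint Y,
    (∀ n, u n ∈ insert OnePoint.infty ((fun y : Y => (y : OnePoint Y)) '' A n)) ∧
      Tendsto u atTop (𝓝 (x : OnePoint Y))) ∧
  (∀ x : Y, (∃ u : ℕ → OnePoint Y,
    (∀ n, u n ∈ insert OnePoint.infty ((fun y : Y => (y : OnePoint Y)) '' A n)) ∧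
      MapClusterPt (x : OnePoint Y) atTop u) → x ∈ B)

/-- Convergence of compact sets of paths in the Hausdorff "metric" associated to `dM1`. -/
def HausConvM1 (A : ℕ → Set PathSp) (B : Set PathSp) : Prop :=
  Tendsto (fun n => hausDist dM1 (A n) B) atTop (𝓝 0)


/-!
`Θ` restricted to `S = ℝ̄ × ℝ` is a topological embedding into `ℝ²`, and it keeps `S` away from
the two added points `(0, ±1)`. A correspondence of small `d_sqz`-distortion between `π_n∗` and
`π∗` therefore places every point of one graph either near a point of the other graph in the
topology of `S`, or near `(0, ±1)`, i.e. outside every compact subset of `S`; this is local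
Hausdorff convergence. The limit graph is closed in `S` because along `I_π` the values of
`π(·±)` converge to `π(t−)` from the left and to `π(t+)` from the right, and the (filled)
graph is squeezed between them.
-/

end PathsPaper

namespace Real

theorem tanh_strictMono : StrictMono tanh := by
  intro a b hab
  by_contra! hba
  have := artanh_le_artanh (neg_one_lt_tanh b) (tanh_lt_one a) hba
  rw [artanh_tanh, artanh_tanh] at this
  exact this.not_gt hab

theorem range_tanh : range tanh = Ioo (-1) 1 := by
  rw [← image_univ, tanh_bijOn.image_eq]

theorem isEmbedding_tanh : IsEmbedding tanh :=
  tanh_strictMono.isEmbedding_of_ordConnected (range_tanh ▸ ordConnected_Ioo)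

end Real

namespace PathsPaper

section LocalHausdorff

variable {Y : Type*} [TopologicalSpace Y] {A : ℕ → Set Y}

theorem exists_tendsto_onePoint_of_eventually_mem {y : ℕ → Y} {x : Y}
    (hyA : ∀ᶠ n in atTop, y n ∈ A n) (hyx : Tendsto y atTop (𝓝 x)) :
    ∃ u : ℕ → OnePoint Y,
      (∀ n, u n ∈ insert OnePoint.infty ((fun y : Y => (y : OnePoint Y)) '' A n)) ∧
      Tendsto u atTop (𝓝 (x : OnePoint Y)) := by
  classical
  refine ⟨fun n => if y n ∈ A n then (y n : OnePoint Y) else OnePoint.infty, fun n => ?_, ?_⟩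
  · dsimp only
    split_ifs with h
    · exact mem_insert_of_mem _ (mem_image_of_mem _ h)
    · exact mem_insert _ _
  · refine ((OnePoint.continuous_coe.tendsto x).comp hyx).congr' ?_
    filter_upwards [hyA] with n hn
    simp [hn]

theorem frequently_inter_nonempty_of_mapClusterPt {u : ℕ → OnePoint Y} {x : Y}
    (hu : ∀ n, u n ∈ insert OnePoint.infty ((fun y : Y => (y : OnePoint Y)) '' A n))
    (hux : MapClusterPt (x : OnePoint Y) atTop u) {V : Set Y} (hV : V ∈ 𝓝 x) :
    ∃ᶠ n in atTop, (A n ∩ V).Nonempty := by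
  have hfreq : ∃ᶠ n in atTop, u n ∈ (fun y : Y => (y : OnePoint Y)) '' V :=
    mapClusterPt_iff_frequently.1 hux _ (by rw [OnePoint.nhds_coe_eq]; exact image_mem_map hV)
  refine hfreq.mono fun n ⟨y, hyV, hyu⟩ => ⟨y, ?_, hyV⟩
  rcases hu n with h | ⟨y', hy'A, hy'u⟩
  · exact absurd (hyu.trans h) (OnePoint.coe_ne_infty y)
  · rwa [← OnePoint.coe_injective (hy'u.trans hyu.symm)]

/-- Approximants lying in `P`, which stays away from `e '' Y`, play the role of `∞` in the
one-point compactification. -/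
theorem lhConv_of_forall_dist_lt {Z : Type*} [PseudoMetricSpace Z] {e : Y → Z}
    (he : IsInducing e) {P : Set Z} (hP : IsClosed P) (heP : ∀ y, e y ∉ P)
    {B : Set Y} (hB : IsClosed B) {ε : ℕ → ℝ} (hε : Tendsto ε atTop (𝓝 0))
    (hBA : ∀ n, ∀ y ∈ B, ∃ z ∈ e '' A n ∪ P, dist z (e y) < ε n)
    (hAB : ∀ n, ∀ y ∈ A n, ∃ z ∈ e '' B ∪ P, dist z (e y) < ε n) :
    LHConv A B := by
  refine ⟨fun x hx => ?_, fun x ⟨u, hu, hux⟩ => ?_⟩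
  · choose z hzA hzx using fun n => hBA n x hx
    have hz_lim : Tendsto z atTop (𝓝 (e x)) := tendsto_iff_dist_tendsto_zero.2 <|
      squeeze_zero (fun _ => dist_nonneg) (fun n => (hzx n).le) hε
    have hz_image : ∀ᶠ n in atTop, z n ∈ e '' A n := by
      filter_upwards [hz_lim.eventually (hP.isOpen_compl.mem_nhds (heP x))] with n hn
      exact (hzA n).resolve_right hn
    have : Nonempty Y := ⟨x⟩
    choose! y hyA hyz using fun n (h : z n ∈ e '' A n) => h
    refine exists_tendsto_onePoint_of_eventually_mem (hz_image.mono hyA) ?_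
    rw [he.tendsto_nhds_iff]
    exact hz_lim.congr' (hz_image.mono fun n hn => (hyz n hn).symm)
  · rw [← hB.closure_eq, he.closure_eq_preimage_closure_image, mem_preimage,
      Metric.mem_closure_iff]
    intro δ hδ
    obtain ⟨r, hr, hrP⟩ := Metric.isOpen_iff.1 hP.isOpen_compl (e x) (heP x)
    set η := min δ r
    have hη : 0 < η := lt_min hδ hr
    have hV : e ⁻¹' Metric.ball (e x) (η / 2) ∈ 𝓝 x :=
      he.continuous.continuousAt.preimage_mem_nhds (Metric.ball_mem_nhds _ (by positivity))
    obtain ⟨n, ⟨y, hyA, hyx⟩, hεn⟩ :=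
      ((frequently_inter_nonempty_of_mapClusterPt hu hux hV).and_eventually
        (hε.eventually_lt_const (half_pos hη))).exists
    obtain ⟨z, hzB, hzy⟩ := hAB n y hyA
    have hzx : dist z (e x) < η := by
      have := dist_triangle z (e y) (e x)
      rw [mem_preimage, Metric.mem_ball] at hyx
      linarith
    have hzP : z ∉ P := hrP (Metric.mem_ball.2 (hzx.trans_le (min_le_right _ _)))
    exact ⟨z, hzB.resolve_right hzP, by rw [dist_comm]; exact hzx.trans_le (min_le_left _ _)⟩

end LocalHausdorff

section SqueezedSpace

@[simp] theorem etanh_top : etanh ⊤ = 1 := rfl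

@[simp] theorem etanh_bot : etanh ⊥ = -1 := by simp [etanh]

@[simp] theorem etanh_coe (t : ℝ) : etanh t = Real.tanh t := by simp [etanh]

theorem etanh_strictMono : StrictMono etanh := by
  intro a b hab
  induction a <;> induction b <;>
    simp_all [Real.neg_one_lt_tanh, Real.tanh_lt_one, Real.tanh_strictMono.lt_iff_lt]

theorem range_etanh : range etanh = Icc (-1) 1 := by
  refine Subset.antisymm ?_ fun y hy => ?_
  · rintro _ ⟨x, rfl⟩
    induction x <;> simp [(Real.neg_one_lt_tanh _).le, (Real.tanh_lt_one _).le]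
  · rcases hy.1.eq_or_lt with rfl | hy₁
    · exact ⟨⊥, etanh_bot⟩
    rcases hy.2.eq_or_lt with rfl | hy₂
    · exact ⟨⊤, etanh_top⟩
    obtain ⟨t, -, rfl⟩ := Real.tanh_surjOn ⟨hy₁, hy₂⟩
    exact ⟨t, etanh_coe t⟩

theorem isEmbedding_etanh : IsEmbedding etanh :=
  etanh_strictMono.isEmbedding_of_ordConnected (range_etanh ▸ ordConnected_Icc)

theorem isEmbedding_theta_inl : IsEmbedding fun p : EReal × ℝ => theta (Sum.inl p) := by
  have hshear : IsEmbedding fun q : ℝ × ℝ => (q.1 / (1 + |q.2|), q.2) :=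
    Function.LeftInverse.isEmbedding (f := fun q : ℝ × ℝ => (q.1 * (1 + |q.2|), q.2))
      (fun q => by simp [div_mul_cancel₀ _ (by positivity : (1 + |q.2|) ≠ 0)])
      (by fun_prop) (by fun_prop (disch := intro; positivity))
  exact ((IsEmbedding.id.prodMap Real.isEmbedding_tanh).comp hshear).comp
    (isEmbedding_etanh.prodMap IsEmbedding.id)

theorem theta_inl_notMem_range_inr (p : EReal × ℝ) :
    theta (Sum.inl p) ∉ range fun b => theta (Sum.inr b) := by
  rintro ⟨b, hb⟩
  have := congrArg Prod.snd hb
  cases b <;> simp [theta] at this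
  · exact (Real.neg_one_lt_tanh p.2).ne this
  · exact (Real.tanh_lt_one p.2).ne' this

theorem theta_mem_of_mem_starSet {G : Set (EReal × ℝ)} {z : Rsq} (hz : z ∈ starSet G) :
    theta z ∈ (fun p => theta (Sum.inl p)) '' G ∪ range fun b => theta (Sum.inr b) := by
  rcases hz with ⟨p, hp, rfl⟩ | hz
  · exact Or.inl ⟨p, hp, rfl⟩
  · rcases hz with rfl | rfl <;> exact Or.inr ⟨_, rfl⟩

theorem dist_theta_le_dSqz (z z' : Rsq) : dist (theta z) (theta z') ≤ dSqz z z' := by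
  rw [Prod.dist_eq, Real.dist_eq, Real.dist_eq]
  exact max_le (Real.abs_le_sqrt (le_add_of_nonneg_right (sq_nonneg _)))
    (Real.abs_le_sqrt (le_add_of_nonneg_left (sq_nonneg _)))

theorem abs_theta_le_one (z : Rsq) : |(theta z).1| ≤ 1 ∧ |(theta z).2| ≤ 1 := by
  rcases z with ⟨x, t⟩ | b
  · have hx : etanh x ∈ Icc (-1) 1 := range_etanh ▸ mem_range_self x
    rw [mem_Icc, ← abs_le] at hx
    refine ⟨?_, (Real.abs_tanh_lt_one t).le⟩
    rw [theta, abs_div, div_le_one (by positivity)]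
    linarith [abs_nonneg (1 + |t|), le_abs_self (1 + |t|), abs_nonneg t]
  · cases b <;> simp [theta]

theorem dSqz_le_three (z z' : Rsq) : dSqz z z' ≤ 3 := by
  obtain ⟨h₁, h₂⟩ := abs_theta_le_one z
  obtain ⟨h₁', h₂'⟩ := abs_theta_le_one z'
  rw [abs_le] at h₁ h₂ h₁' h₂'
  rw [dSqz, Real.sqrt_le_left (by norm_num)]
  nlinarith

end SqueezedSpace

section Correspondences

def trivialCorr (A B : Set Rsq) : Set (Rsq × Rsq) :=
  A ×ˢ {Sum.inr false} ∪ {Sum.inr true} ×ˢ B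

theorem isCorr_trivialCorr (G₁ G₂ : Set (EReal × ℝ)) :
    IsCorr (starSet G₁) (starSet G₂) (trivialCorr (starSet G₁) (starSet G₂)) := by
  have hbot : Sum.inr false ∈ starSet G₂ := Or.inr (Or.inl rfl)
  have htop : Sum.inr true ∈ starSet G₁ := Or.inr (Or.inr rfl)
  refine ⟨?_, fun a ha => ⟨_, hbot, Or.inl ⟨ha, rfl⟩⟩, fun b hb => ⟨_, htop, Or.inr ⟨rfl, hb⟩⟩⟩
  rintro ⟨a, b⟩ (⟨ha, rfl⟩ | ⟨rfl, hb⟩)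
  · exact ⟨ha, hbot⟩
  · exact ⟨htop, hb⟩

theorem isMono_trivialCorr (π₁ π₂ : PathSp) (A B : Set Rsq) : IsMono π₁ π₂ (trivialCorr A B) := by
  rintro ⟨⟨a, b⟩, hab, ⟨a', b'⟩, -, h₁, h₂⟩
  rcases hab with ⟨-, rfl⟩ | ⟨rfl, -⟩
  · cases b' <;> simp [sLt] at h₂
  · cases a' <;> simp [sLt] at h₁

theorem exists_isCorr_forall_dSqz_lt {π₁ π₂ : PathSp} {G₁ G₂ : Set (EReal × ℝ)} {ε : ℝ}
    (h : sInf {h | ∃ C, IsCorr (starSet G₁) (starSet G₂) C ∧ IsMono π₁ π₂ C ∧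
      h = corrSup C} < ε) :
    ∃ C, IsCorr (starSet G₁) (starSet G₂) C ∧ ∀ z ∈ C, dSqz z.1 z.2 < ε := by
  obtain ⟨_, ⟨C, hC, -, rfl⟩, hCε⟩ := exists_lt_of_csInf_lt (s := {h | ∃ C,
    IsCorr (starSet G₁) (starSet G₂) C ∧ IsMono π₁ π₂ C ∧ h = corrSup C})
    ⟨_, _, isCorr_trivialCorr G₁ G₂, isMono_trivialCorr π₁ π₂ _ _, rfl⟩ h
  refine ⟨C, hC, fun z hz => (le_csSup ⟨3, ?_⟩ (mem_image_of_mem _ hz)).trans_lt hCε⟩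
  rintro _ ⟨z', -, rfl⟩
  exact dSqz_le_three _ _

end Correspondences

section ClosedGraphs

theorem eq_of_mem_closure_setOf_mem_uIcc {L T : Type*} [LinearOrder L] [TopologicalSpace L]
    [OrderTopology L] [TopologicalSpace T] {l r : T → L} {s : Set T} {t : T} {a x : L}
    (hl : Tendsto l (𝓝[s] t) (𝓝 a)) (hr : Tendsto r (𝓝[s] t) (𝓝 a))
    (hx : (x, t) ∈ closure {q : L × T | q.2 ∈ s ∧ q.1 ∈ uIcc (l q.2) (r q.2)}) : x = a := by
  rw [mem_closure_iff_clusterPt] at hx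
  set F := 𝓝 (x, t) ⊓ 𝓟 {q : L × T | q.2 ∈ s ∧ q.1 ∈ uIcc (l q.2) (r q.2)}
  have : F.NeBot := hx
  have hmem : ∀ᶠ q in F, q.2 ∈ s ∧ q.1 ∈ uIcc (l q.2) (r q.2) :=
    mem_inf_of_right (mem_principal_self _)
  have hsnd : Tendsto Prod.snd F (𝓝[s] t) := tendsto_nhdsWithin_iff.2
    ⟨(continuous_snd.tendsto _).mono_left inf_le_left, hmem.mono fun q hq => hq.1⟩
  have hmin := (hl.comp hsnd).min (hr.comp hsnd)
  have hmax := (hl.comp hsnd).max (hr.comp hsnd)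
  rw [min_self] at hmin
  rw [max_self] at hmax
  exact tendsto_nhds_unique ((continuous_fst.tendsto _).mono_left inf_le_left)
    (tendsto_of_tendsto_of_tendsto_of_le_of_le' hmin hmax
      (hmem.mono fun q hq => hq.2.1) (hmem.mono fun q hq => hq.2.2))

theorem PathSp.isClosed_setOf_mem (π : PathSp) {V : ℝ → Set EReal} (hV : ∀ t, IsClosed (V t))
    (hVsub : ∀ t, V t ⊆ uIcc (π.l t) (π.r t)) (hlV : ∀ t, π.l t ∈ V t)
    (hrV : ∀ t, π.r t ∈ V t) :
    IsClosed {p : EReal × ℝ | p.2 ∈ π.I ∧ p.1 ∈ V p.2} := by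
  refine closure_subset_iff_isClosed.1 fun ⟨x, t⟩ hp => ?_
  have ht : t ∈ π.I :=
    closure_minimal (fun p hp => hp.1) (π.closed_I.preimage continuous_snd) hp
  have hsplit : {p : EReal × ℝ | p.2 ∈ π.I ∧ p.1 ∈ V p.2} ⊆
      {q | q.2 ∈ π.I ∩ Iio t ∧ q.1 ∈ uIcc (π.l q.2) (π.r q.2)} ∪ V t ×ˢ {t} ∪
      {q | q.2 ∈ π.I ∩ Ioi t ∧ q.1 ∈ uIcc (π.l q.2) (π.r q.2)} := by
    rintro ⟨y, s⟩ ⟨hs, hy⟩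
    rcases lt_trichotomy s t with hst | rfl | hst
    · exact Or.inl (Or.inl ⟨⟨hs, hst⟩, hVsub s hy⟩)
    · exact Or.inl (Or.inr ⟨hy, rfl⟩)
    · exact Or.inr ⟨⟨hs, hst⟩, hVsub s hy⟩
  have hp' := closure_mono hsplit hp
  rw [closure_union, closure_union] at hp'
  rcases hp' with (hp' | hp') | hp'
  · rw [eq_of_mem_closure_setOf_mem_uIcc (π.left_cont t ht) (π.left_lim t ht) hp']
    exact ⟨ht, hlV t⟩
  · exact ⟨ht, (((hV t).prod isClosed_singleton).closure_subset hp').1⟩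
  · rw [eq_of_mem_closure_setOf_mem_uIcc (π.right_lim t ht) (π.right_cont t ht) hp']
    exact ⟨ht, hrV t⟩

theorem isClosed_graph (π : PathSp) : IsClosed (graph π) :=
  π.isClosed_setOf_mem (V := fun t => {π.l t, π.r t}) (fun _ => (toFinite _).isClosed)
    (fun _ => insert_subset left_mem_uIcc (singleton_subset_iff.2 right_mem_uIcc))
    (fun _ => mem_insert _ _) (fun _ => mem_insert_of_mem _ rfl)

theorem isClosed_fgraph (π : PathSp) : IsClosed (fgraph π) :=
  π.isClosed_setOf_mem (fun _ => isClosed_Icc) (fun _ => Subset.rfl) (fun _ => left_mem_uIcc)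
    (fun _ => right_mem_uIcc)

end ClosedGraphs

theorem lhConv_of_isCorr {Gn : ℕ → Set (EReal × ℝ)} {G : Set (EReal × ℝ)} (hG : IsClosed G)
    {ε : ℕ → ℝ} (hε : Tendsto ε atTop (𝓝 0)) {C : ℕ → Set (Rsq × Rsq)}
    (hC : ∀ n, IsCorr (starSet (Gn n)) (starSet G) (C n))
    (hCε : ∀ n, ∀ z ∈ C n, dSqz z.1 z.2 < ε n) :
    LHConv Gn G := by
  refine lhConv_of_forall_dist_lt isEmbedding_theta_inl.isInducing (finite_range _).isClosed
    theta_inl_notMem_range_inr hG hε (fun n y hy => ?_) (fun n y hy => ?_)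
  · obtain ⟨z, hz, hzC⟩ := (hC n).2.2 (Sum.inl y) (Or.inl ⟨y, hy, rfl⟩)
    exact ⟨theta z, theta_mem_of_mem_starSet hz,
      (dist_theta_le_dSqz _ _).trans_lt (hCε n _ hzC)⟩
  · obtain ⟨z, hz, hzC⟩ := (hC n).2.1 (Sum.inl y) (Or.inl ⟨y, hy, rfl⟩)
    refine ⟨theta z, theta_mem_of_mem_starSet hz, ?_⟩
    rw [dist_comm]
    exact (dist_theta_le_dSqz _ _).trans_lt (hCε n _ hzC)

theorem lhConv_of_tendsto_sInf {πn : ℕ → PathSp} {π : PathSp} {Gn : ℕ → Set (EReal × ℝ)}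
    {G : Set (EReal × ℝ)} (hG : IsClosed G)
    (h : Tendsto (fun n => sInf {h | ∃ C, IsCorr (starSet (Gn n)) (starSet G) C ∧
      IsMono (πn n) π C ∧ h = corrSup C}) atTop (𝓝 0)) :
    LHConv Gn G := by
  choose C hC hCε using fun n => exists_isCorr_forall_dSqz_lt
    (lt_add_of_pos_right _ (Nat.one_div_pos_of_nat (n := n)))
  exact lhConv_of_isCorr hG (by simpa using h.add tendsto_one_div_add_atTop_nhds_zero_nat) hC hCε

/-- **Lemma (Convergence of graphs).**
If `π_n → π` in the J1 topology then the closed graphs converge in the local Hausdorff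
topology on `Cl(S)`; if `π_n → π` in the M1 topology then the filled graphs converge in
the local Hausdorff topology on `Cl(S)`. -/
theorem convergence_of_graphs
    (πn : ℕ → PathSp) (π : PathSp) :
    (J1Conv πn π → LHConv (fun n => graph (πn n)) (graph π)) ∧
    (M1Conv πn π → LHConv (fun n => fgraph (πn n)) (fgraph π)) :=
  ⟨lhConv_of_tendsto_sInf (isClosed_graph π), lhConv_of_tendsto_sInf (isClosed_fgraph π)⟩

end PathsPaper
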